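/- arXiv:2101.05238 — 8 statements merged into one kernel-verified Lean document; each statement's English description precedes it below -/
import Mathlib

section
/- Let L be an n×n non-negative integer matrix with zero diagonal. Then there exist positive integer vectors d, r in ℕ₊ⁿ with (Diag(d) − L)·rᵗ = 0 and gcd(r₁,…,rₙ) = 1 if and only if L has no row with all entries equal to zero. -/
/-! If a row of `L` vanishes, the corresponding equation reads `dᵢ rᵢ = 0`, which is impossible
for positive `d`, `r`. Conversely, taking `d` to be the row sums of `L` and `r = 1` gives an
arithmetical structure of the Laplacian `Diag(L·1) − L`, and `d` is positive exactly when no row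
of `L` vanishes. -/

open Matrix

theorem Finset.gcd_eq_one_of_isUnit {α β : Type*} [CommMonoidWithZero α] [NormalizedGCDMonoid α]
    {s : Finset β} {f : β → α} {b : β} (hb : b ∈ s) (hu : IsUnit (f b)) : s.gcd f = 1 := by
  rw [← Finset.normalize_gcd]
  exact normalize_eq_one.mpr (isUnit_of_dvd_unit (Finset.gcd_dvd hb) hu)

section

variable {ι R : Type*} [Fintype ι] [DecidableEq ι] [Ring R]

theorem Matrix.diagonal_sub_mulVec_apply (d r : ι → R) (L : Matrix ι ι R) (i : ι) :
    ((diagonal d - L) *ᵥ r) i = d i * r i - (L *ᵥ r) i := by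
  simp only [sub_mulVec, Pi.sub_apply, mulVec_diagonal]

theorem Matrix.exists_ne_zero_of_diagonal_sub_mulVec_eq_zero [NoZeroDivisors R]
    {d r : ι → R} {L : Matrix ι ι R} (h : (diagonal d - L) *ᵥ r = 0) {i : ι}
    (hd : d i ≠ 0) (hr : r i ≠ 0) : ∃ j, L i j ≠ 0 := by
  by_contra! hrow
  have hLr : (L *ᵥ r) i = 0 := by simp [mulVec, dotProduct, hrow]
  have hi := congrFun h i
  rw [diagonal_sub_mulVec_apply, hLr, sub_zero] at hi
  exact mul_ne_zero hd hr hi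

theorem Matrix.diagonal_rowSum_sub_mulVec_one (L : Matrix ι ι R) :
    (diagonal (fun i => ∑ j, L i j) - L) *ᵥ 1 = 0 := by
  funext i
  rw [diagonal_sub_mulVec_apply]
  simp [mulVec, dotProduct]

end

theorem stmt_0_general (n : ℕ) (hn : 0 < n) (L : Matrix (Fin n) (Fin n) ℤ)
    (hL : ∀ i j, 0 ≤ L i j) :
    (∃ d r : Fin n → ℤ, (∀ i, 0 < d i) ∧ (∀ i, 0 < r i) ∧
      (Matrix.diagonal d - L).mulVec r = 0 ∧ Finset.univ.gcd r = 1) ↔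
    (∀ i, ∃ j, L i j ≠ 0) := by
  constructor
  · rintro ⟨d, r, hd, hr, heq, -⟩ i
    exact exists_ne_zero_of_diagonal_sub_mulVec_eq_zero heq (hd i).ne' (hr i).ne'
  · intro hrow
    refine ⟨fun i => ∑ j, L i j, 1, fun i => ?_, fun _ => one_pos,
      diagonal_rowSum_sub_mulVec_one L,
      Finset.gcd_eq_one_of_isUnit (Finset.mem_univ ⟨0, hn⟩) isUnit_one⟩
    obtain ⟨j, hj⟩ := hrow i
    exact Finset.sum_pos' (fun k _ => hL i k) ⟨j, Finset.mem_univ j, (hL i j).lt_of_ne' hj⟩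

/-- arithmetical structures exist iff no zero row. -/
theorem stmt_0 (n : ℕ) (hn : 0 < n) (L : Matrix (Fin n) (Fin n) ℤ)
    (hL : ∀ i j, 0 ≤ L i j) (hdiag : ∀ i, L i i = 0) :
    (∃ d r : Fin n → ℤ, (∀ i, 0 < d i) ∧ (∀ i, 0 < r i) ∧
      (Matrix.diagonal d - L).mulVec r = 0 ∧ Finset.univ.gcd r = 1) ↔
    (∀ i, ∃ j, L i j ≠ 0) :=
  stmt_0_general n hn L hL
end

section
/- Let M be a real Z-matrix (a square matrix with nonpositive off-diagonal entries). If there exists a vector r with all entries strictly positive such that M·rᵗ = 0ᵗ, then all principal minors of M are non-negative, i.e. M is an M-matrix. -/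
/-!
If a Z-matrix `A` maps a positive vector `x` to a nonnegative one, then `A * diagonal x` is weakly
diagonally dominant. Adding `ε • 1` makes it strictly diagonally dominant with positive diagonal,
and such a matrix has positive determinant: by Gershgorin, the path `t ↦ D + t • (A - D)` from its
diagonal part `D` consists of nonsingular matrices, so the determinant keeps the sign of `det D`.
Letting `ε → 0` gives `0 ≤ det A`. A principal submatrix inherits the hypotheses, because the
columns it drops contribute nonpositive terms to `(A *ᵥ x) i`.
-/

/-- The principal minor of `M` indexed by the subset `s`. -/
noncomputable def principalMinor {n : ℕ} (M : Matrix (Fin n) (Fin n) ℝ)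
    (s : Finset (Fin n)) : ℝ :=
  (M.submatrix (fun i : s => (i : Fin n)) (fun j : s => (j : Fin n))).det

open Matrix Finset

section
variable {m : Type*} [Fintype m] [DecidableEq m]

theorem Matrix.det_pos_of_sum_abs_lt_diag (A : Matrix m m ℝ)
    (h : ∀ i, ∑ j ∈ univ.erase i, |A i j| < A i i) : 0 < A.det := by
  let D : Matrix m m ℝ := diagonal fun i ↦ A i i
  have offDiag {t : ℝ} {k j : m} (hj : j ∈ univ.erase k) : (D + t • (A - D)) k j = t * A k j := by
    simp [D, diagonal_apply_ne _ (ne_of_mem_erase hj).symm]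
  have det_ne_zero : ∀ t ∈ Set.Icc (0 : ℝ) 1, (D + t • (A - D)).det ≠ 0 := fun t ht ↦
    det_ne_zero_of_sum_row_lt_diag fun k ↦ calc
      ∑ j ∈ univ.erase k, ‖(D + t • (A - D)) k j‖ = t * ∑ j ∈ univ.erase k, |A k j| := by
        rw [mul_sum]
        refine sum_congr rfl fun j hj ↦ ?_
        rw [offDiag hj, Real.norm_eq_abs, abs_mul, abs_of_nonneg ht.1]
      _ ≤ ∑ j ∈ univ.erase k, |A k j| :=
        mul_le_of_le_one_left (sum_nonneg fun _ _ ↦ abs_nonneg _) ht.2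
      _ < A k k := h k
      _ ≤ ‖(D + t • (A - D)) k k‖ := by simp [D, Real.norm_eq_abs, le_abs_self]
  have det_D_pos : 0 < D.det := by
    rw [det_diagonal]
    exact prod_pos fun i _ ↦ (sum_nonneg fun j _ ↦ abs_nonneg _).trans_lt (h i)
  have continuous_det : Continuous fun t : ℝ ↦ (D + t • (A - D)).det := by fun_prop
  by_contra! hA
  obtain ⟨t, ht, hzero⟩ := intermediate_value_Icc' zero_le_one continuous_det.continuousOn
    ⟨by simpa using hA, by simpa using det_D_pos.le⟩
  exact det_ne_zero t ht hzero

theorem Matrix.det_nonneg_of_sum_abs_le_diag (A : Matrix m m ℝ)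
    (h : ∀ i, ∑ j ∈ univ.erase i, |A i j| ≤ A i i) : 0 ≤ A.det := by
  have det_pos : ∀ ε ∈ Set.Ioi (0 : ℝ), 0 < (A + ε • 1).det := fun ε hε ↦
    det_pos_of_sum_abs_lt_diag _ fun i ↦ calc
      ∑ j ∈ univ.erase i, |(A + ε • 1) i j| = ∑ j ∈ univ.erase i, |A i j| :=
        sum_congr rfl fun j hj ↦ by simp [one_apply_ne' (ne_of_mem_erase hj)]
      _ < A i i + ε := lt_add_of_le_of_pos (h i) hε
      _ = (A + ε • 1) i i := by simp
  have closed : IsClosed {ε : ℝ | 0 ≤ (A + ε • 1).det} := isClosed_le continuous_const (by fun_prop)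
  have := closed.closure_subset_iff.2 fun ε hε ↦ (det_pos ε hε).le
  rw [closure_Ioi] at this
  simpa using this Set.self_mem_Ici

theorem Matrix.det_nonneg_of_mulVec_nonneg (A : Matrix m m ℝ) (hA : ∀ i j, i ≠ j → A i j ≤ 0)
    (x : m → ℝ) (hx : ∀ i, 0 < x i) (hAx : 0 ≤ A *ᵥ x) : 0 ≤ A.det := by
  have dominant : ∀ i, ∑ j ∈ univ.erase i, |(A * diagonal x) i j| ≤ (A * diagonal x) i i := by
    intro i
    calc ∑ j ∈ univ.erase i, |(A * diagonal x) i j| = ∑ j ∈ univ.erase i, -(A i j * x j) :=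
          sum_congr rfl fun j hj ↦ by
            rw [mul_diagonal, abs_of_nonpos
              (mul_nonpos_of_nonpos_of_nonneg (hA i j (ne_of_mem_erase hj).symm) (hx j).le)]
      _ = A i i * x i - (A *ᵥ x) i := by
        rw [sum_neg_distrib, sum_erase_eq_sub (mem_univ i), mulVec, dotProduct]; ring
      _ ≤ (A * diagonal x) i i := by rw [mul_diagonal]; exact sub_le_self _ (hAx i)
  have := det_nonneg_of_sum_abs_le_diag _ dominant
  rw [det_mul, det_diagonal] at this
  exact nonneg_of_mul_nonneg_left this (prod_pos fun i _ ↦ hx i)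

theorem Matrix.mulVec_le_submatrix_mulVec (A : Matrix m m ℝ) (hA : ∀ i j, i ≠ j → A i j ≤ 0)
    {x : m → ℝ} (hx : 0 ≤ x) (s : Finset m) (i : s) :
    (A *ᵥ x) i ≤ (A.submatrix (↑) (↑) *ᵥ fun j : s ↦ x j) i := by
  have outside : ∑ j ∈ univ \ s, A i j * x j ≤ 0 := sum_nonpos fun j hj ↦
    mul_nonpos_of_nonpos_of_nonneg (hA i j fun h ↦ (mem_sdiff.1 hj).2 (h ▸ i.2)) (hx j)
  calc (A *ᵥ x) i = ∑ j ∈ s, A i j * x j + ∑ j ∈ univ \ s, A i j * x j := by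
        rw [sum_sdiff_eq_sub (subset_univ s), mulVec, dotProduct]; ring
    _ ≤ ∑ j ∈ s, A i j * x j := add_le_of_nonpos_right outside
    _ = (A.submatrix (↑) (↑) *ᵥ fun j : s ↦ x j) i := (sum_coe_sort s _).symm

end

/-- a Z-matrix with a positive vector in its kernel is an M-matrix. -/
theorem stmt_3 (n : ℕ) (M : Matrix (Fin n) (Fin n) ℝ)
    (hZ : ∀ i j, i ≠ j → M i j ≤ 0)
    (r : Fin n → ℝ) (hr : ∀ i, 0 < r i) (hker : M.mulVec r = 0) :
    ∀ s : Finset (Fin n), 0 ≤ principalMinor M s := fun s ↦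
  det_nonneg_of_mulVec_nonneg _ (fun i j hij ↦ hZ i j (Subtype.coe_injective.ne hij)) _
    (fun i ↦ hr i) fun i ↦ by
      simpa [hker] using mulVec_le_submatrix_mulVec M hZ (fun j ↦ (hr j).le) s i
end

section
/- Let M be an irreducible real Z-matrix. Then there exists a vector r with all entries strictly positive such that M·rᵗ = 0ᵗ if and only if there exists a vector s with all entries strictly positive such that Mᵗ·sᵗ = 0ᵗ. -/
/-!
Given `r > 0` with `M r = 0`, the matrix `M` is singular, so some `s ≠ 0` has `sᵀ M = 0`.
Because the off-diagonal entries of `M` are nonpositive, the triangle inequality gives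
`|s|ᵀ M ≤ 0`, and pairing with `r > 0` (using `|s|ᵀ M r = 0`) forces `|s|ᵀ M = 0`.
Irreducibility then makes `|s|` strictly positive: on the boundary of its support,
`|s|ᵀ M` would be strictly negative. The converse is the same argument for `Mᵀ`.
-/

open Finset Matrix

/-- A permutation brings `M` to block upper triangular form exactly when some nonempty proper
index set `S` has `M i j = 0` for all `i ∉ S`, `j ∈ S`; irreducibility excludes this. -/
def MatIrreducible {n : ℕ} (M : Matrix (Fin n) (Fin n) ℝ) : Prop :=
  ∀ S : Finset (Fin n), S.Nonempty → S ≠ Finset.univ → ∃ i ∈ S, ∃ j ∉ S, M i j ≠ 0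

def IsZMatrix {ι R : Type*} [Preorder R] [Zero R] (A : Matrix ι ι R) : Prop :=
  ∀ i j, i ≠ j → A i j ≤ 0

lemma IsZMatrix.transpose {ι R : Type*} [Preorder R] [Zero R] {A : Matrix ι ι R}
    (hA : IsZMatrix A) : IsZMatrix Aᵀ :=
  fun i j hij => hA j i hij.symm

lemma MatIrreducible.transpose {n : ℕ} {M : Matrix (Fin n) (Fin n) ℝ} (hM : MatIrreducible M) :
    MatIrreducible Mᵀ := by
  intro S hS hSuniv
  obtain ⟨i, hi, j, hj, hij⟩ :=
    hM Sᶜ ((compl_ne_univ_iff_nonempty Sᶜ).mp (by rwa [compl_compl]))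
      ((compl_ne_univ_iff_nonempty S).mpr hS)
  exact ⟨j, notMem_compl.mp hj, i, mem_compl.mp hi, hij⟩

lemma IsZMatrix.vecMul_abs_le {ι R : Type*} [Fintype ι] [DecidableEq ι]
    [CommRing R] [LinearOrder R] [IsStrictOrderedRing R] {A : Matrix ι ι R}
    (hA : IsZMatrix A) (x : ι → R) (j : ι) : (|x| ᵥ* A) j ≤ |(x ᵥ* A) j| := by
  simp only [vecMul, dotProduct, Pi.abs_apply]
  rw [← add_sum_erase _ _ (mem_univ j), ← add_sum_erase _ _ (mem_univ j)]
  have hdiag : |x j| * A j j ≤ |x j * A j j| := by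
    rw [abs_mul]; exact mul_le_mul_of_nonneg_left (le_abs_self _) (abs_nonneg _)
  have hoff : ∑ i ∈ univ.erase j, |x i| * A i j ≤ -|∑ i ∈ univ.erase j, x i * A i j| := by
    calc ∑ i ∈ univ.erase j, |x i| * A i j = -∑ i ∈ univ.erase j, |x i * A i j| := by
          rw [← sum_neg_distrib]
          refine sum_congr rfl fun i hi => ?_
          rw [abs_mul, abs_of_nonpos (hA i j (ne_of_mem_erase hi)), mul_neg, neg_neg]
      _ ≤ -|∑ i ∈ univ.erase j, x i * A i j| := neg_le_neg (abs_sum_le_sum_abs _ _)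
  linarith [abs_sub_abs_le_abs_add (x j * A j j) (∑ i ∈ univ.erase j, x i * A i j)]

lemma IsZMatrix.pos_of_vecMul_nonneg {n : ℕ} {M : Matrix (Fin n) (Fin n) ℝ}
    (hZ : IsZMatrix M) (hirr : MatIrreducible M) {y : Fin n → ℝ} (hy : 0 ≤ y) (hy0 : y ≠ 0)
    (hyM : 0 ≤ y ᵥ* M) (i : Fin n) : 0 < y i := by
  by_contra! hi
  set S := univ.filter fun k => 0 < y k
  have hS : S.Nonempty := by
    obtain ⟨k, hk⟩ := Function.ne_iff.mp hy0
    exact ⟨k, mem_filter.mpr ⟨mem_univ k, lt_of_le_of_ne (hy k) (Ne.symm hk)⟩⟩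
  have hSuniv : S ≠ univ := fun h => (mem_filter.mp (h.symm ▸ mem_univ i)).2.not_ge hi
  obtain ⟨k, hk, l, hl, hkl⟩ := hirr S hS hSuniv
  have hyl : y l = 0 := le_antisymm (by simpa [S] using hl) (hy l)
  have hneg : (y ᵥ* M) l < 0 := by
    have hkl' : k ≠ l := fun h => hl (h ▸ hk)
    calc (y ᵥ* M) l = ∑ m, y m * M m l := rfl
      _ < ∑ _m : Fin n, (0 : ℝ) := by
        refine sum_lt_sum (fun m _ => ?_) ⟨k, mem_univ k, ?_⟩
        · rcases eq_or_ne m l with rfl | hml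
          · simp [hyl]
          · exact mul_nonpos_of_nonneg_of_nonpos (hy m) (hZ m l hml)
        · exact mul_neg_of_pos_of_neg (by simpa [S] using hk)
            (lt_of_le_of_ne (hZ k l hkl') hkl)
      _ = 0 := sum_const_zero
  exact (hyM l).not_gt hneg

lemma exists_pos_vecMul_eq_zero {n : ℕ} {M : Matrix (Fin n) (Fin n) ℝ}
    (hZ : IsZMatrix M) (hirr : MatIrreducible M) {r : Fin n → ℝ} (hr : ∀ i, 0 < r i)
    (hMr : M *ᵥ r = 0) : ∃ s : Fin n → ℝ, (∀ i, 0 < s i) ∧ s ᵥ* M = 0 := by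
  cases isEmpty_or_nonempty (Fin n)
  · exact ⟨0, isEmptyElim, Subsingleton.elim _ _⟩
  have hr0 : r ≠ 0 := fun h => (hr (Classical.arbitrary _)).ne' (congrFun h _)
  obtain ⟨s, hs0, hsM⟩ :=
    exists_vecMul_eq_zero_iff.mpr (exists_mulVec_eq_zero_iff.mp ⟨r, hr0, hMr⟩)
  have hle : ∀ j, (|s| ᵥ* M) j ≤ 0 := fun j => by simpa [hsM] using hZ.vecMul_abs_le s j
  have hpair : (|s| ᵥ* M) ⬝ᵥ r = 0 := by rw [← dotProduct_mulVec, hMr, dotProduct_zero]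
  have habsM : |s| ᵥ* M = 0 := funext fun j => by
    have := (sum_eq_zero_iff_of_nonpos fun j _ =>
      mul_nonpos_of_nonpos_of_nonneg (hle j) (hr j).le).mp hpair j (mem_univ j)
    exact (mul_eq_zero.mp this).resolve_right (hr j).ne'
  refine ⟨|s|, hZ.pos_of_vecMul_nonneg hirr (fun i => abs_nonneg (s i)) ?_ habsM.ge, habsM⟩
  exact fun h => hs0 (funext fun i => abs_eq_zero.mp (congrFun h i))

/-- an irreducible Z-matrix has a strictly positive kernel vector iff
its transpose does. -/
theorem stmt_5 (n : ℕ) (M : Matrix (Fin n) (Fin n) ℝ)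
    (hZ : ∀ i j, i ≠ j → M i j ≤ 0) (hirr : MatIrreducible M) :
    (∃ r : Fin n → ℝ, (∀ i, 0 < r i) ∧ M.mulVec r = 0) ↔
    (∃ s : Fin n → ℝ, (∀ i, 0 < s i) ∧ M.transpose.mulVec s = 0) := by
  simp only [mulVec_transpose]
  constructor
  · rintro ⟨r, hr, hMr⟩
    exact exists_pos_vecMul_eq_zero hZ hirr hr hMr
  · rintro ⟨s, hs, hsM⟩
    simpa only [vecMul_transpose] using exists_pos_vecMul_eq_zero (IsZMatrix.transpose hZ)
      hirr.transpose hs ((mulVec_transpose M s).trans hsM)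
end

section
/- Let M be a real Z-matrix. Then M is a quasi M-matrix (all proper principal minors non-negative) if and only if M + εI is a quasi non-singular M-matrix (all proper principal minors strictly positive) for every ε > 0. -/
namespace Matrix

theorem det_submatrix_submatrix_subtype_map {ι κ R : Type*} [CommRing R] [DecidableEq ι]
    [DecidableEq κ] (A : Matrix ι ι R) (f : κ ↪ ι) (T : Finset κ) :
    ((A.submatrix f f).submatrix (↑) (↑) : Matrix T T R).det =
      (A.submatrix (↑) (↑) : Matrix (T.map f) (T.map f) R).det := by
  rw [← det_submatrix_equiv_self (T.equivMap f)]
  rfl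

variable {ι : Type*} [Fintype ι] [DecidableEq ι]

theorem det_add_smul_one_eq_sum {R : Type*} [CommRing R] (A : Matrix ι ι R) (ε : R) :
    (A + ε • 1).det =
      ∑ S : Finset ι, ε ^ Sᶜ.card * (A.submatrix (↑) (↑) : Matrix S S R).det := by
  change detRowAlternating.toMultilinearMap (A.row + (ε • 1 : Matrix ι ι R).row) = _
  rw [MultilinearMap.map_add_univ]
  refine Finset.sum_congr rfl fun S _ => ?_
  have hrows : S.piecewise A.row (ε • 1 : Matrix ι ι R).row =
      fun i => (if i ∈ Sᶜ then ε else 1) • S.piecewise A.row (1 : Matrix ι ι R).row i := by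
    funext i
    by_cases hi : i ∈ S
    · simp [hi]
    · simp only [hi, Finset.piecewise_eq_of_notMem, Finset.mem_compl, not_false_eq_true,
        if_true]
      rfl
  rw [hrows, MultilinearMap.map_smul_univ, Finset.prod_ite_mem, Finset.univ_inter,
    Finset.prod_const, smul_eq_mul]
  exact congrArg _ (det_piecewise_one_eq_submatrix_det A S)

theorem det_add_smul_one_pos {R : Type*} [CommRing R] [LinearOrder R] [IsStrictOrderedRing R]
    (A : Matrix ι ι R) {ε : R} (hε : 0 < ε)
    (hA : ∀ S : Finset ι, 0 ≤ (A.submatrix (↑) (↑) : Matrix S S R).det) :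
    0 < (A + ε • 1).det := by
  rw [det_add_smul_one_eq_sum]
  refine Finset.sum_pos' (fun S _ => mul_nonneg (pow_nonneg hε.le _) (hA S))
    ⟨∅, Finset.mem_univ _, ?_⟩
  rw [det_isEmpty, mul_one]
  exact pow_pos hε _

theorem det_nonneg_of_forall_det_add_smul_one_pos (A : Matrix ι ι ℝ)
    (h : ∀ ε : ℝ, 0 < ε → 0 < (A + ε • 1).det) : 0 ≤ A.det := by
  have hcont : Continuous fun ε : ℝ => (A + ε • 1).det := by fun_prop
  have hlim : Filter.Tendsto (fun ε : ℝ => (A + ε • 1).det)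
      (nhdsWithin 0 (Set.Ioi 0)) (nhds A.det) := by
    simpa using (hcont.tendsto 0).mono_left nhdsWithin_le_nhds
  exact ge_of_tendsto hlim (eventually_nhdsWithin_of_forall fun ε hε => (h ε hε).le)

end Matrix

theorem principalMinor_add_smul_one {n : ℕ} (M : Matrix (Fin n) (Fin n) ℝ) (ε : ℝ)
    (s : Finset (Fin n)) :
    principalMinor (M + ε • 1) s = (M.submatrix (↑) (↑) + ε • 1 : Matrix s s ℝ).det := by
  change (M.submatrix Subtype.val Subtype.val +
    ε • (1 : Matrix (Fin n) (Fin n) ℝ).submatrix (Subtype.val : s → Fin n) Subtype.val).det = _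
  rw [Matrix.submatrix_one _ Subtype.val_injective]

theorem stmt_8_general (n : ℕ) (M : Matrix (Fin n) (Fin n) ℝ) :
    (∀ s : Finset (Fin n), s ≠ Finset.univ → 0 ≤ principalMinor M s) ↔
    (∀ ε : ℝ, 0 < ε → ∀ s : Finset (Fin n), s ≠ Finset.univ →
      0 < principalMinor (M + ε • (1 : Matrix (Fin n) (Fin n) ℝ)) s) := by
  constructor
  · intro h ε hε s hs
    rw [principalMinor_add_smul_one]
    refine Matrix.det_add_smul_one_pos _ hε fun t => ?_
    have hts : t.map (Function.Embedding.subtype (· ∈ s)) ⊆ s := Finset.map_subtype_subset t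
    have hproper := Finset.ssubset_of_subset_of_ssubset hts (Finset.ssubset_univ_iff.2 hs)
    exact (h _ hproper.ne).trans_eq (Matrix.det_submatrix_submatrix_subtype_map M _ t).symm
  · intro h s hs
    refine Matrix.det_nonneg_of_forall_det_add_smul_one_pos _ fun ε hε => ?_
    rw [← principalMinor_add_smul_one]
    exact h ε hε s hs

/-- a Z-matrix is a quasi M-matrix iff `M + εI` is a quasi
non-singular M-matrix for every `ε > 0`. -/
theorem stmt_8 (n : ℕ) (M : Matrix (Fin n) (Fin n) ℝ)
    (hZ : ∀ i j, i ≠ j → M i j ≤ 0) :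
    (∀ s : Finset (Fin n), s ≠ Finset.univ → 0 ≤ principalMinor M s) ↔
    (∀ ε : ℝ, 0 < ε → ∀ s : Finset (Fin n), s ≠ Finset.univ →
      0 < principalMinor (M + ε • (1 : Matrix (Fin n) (Fin n) ℝ)) s) :=
  stmt_8_general n M
end

section
/- Let a, b ∈ ℕ and let L be the 2×2 matrix with zero diagonal and off-diagonal entries a and b. Then a positive integer vector (d₁, d₂) satisfies that Diag(d₁,d₂) − L is an almost non-singular M-matrix if and only if d₁d₂ ≥ ab. Consequently, the set of minimal such vectors equals the set of minimal elements of { (d, max(1, ⌈ab/d⌉)) : d ∈ ℕ₊, d ≤ max(1, ab) }. -/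
/-!
For a positive diagonal the proper principal minors of `Diag(d) - L` are `d₁` and `d₂`, so the
M-matrix condition reduces to `det = d₁ d₂ - ab ≥ 0`. For fixed `d₁` the least admissible `d₂` is
`max 1 ⌈ab / d₁⌉`, and capping `d₁` at `max 1 (ab)` loses nothing; hence every admissible vector
dominates one of the listed candidates, which are themselves admissible, and two sets related
this way have the same minimal elements.
-/

/-- The principal minor of an integer matrix indexed by the subset `s`. -/
def principalMinorZ {n : ℕ} (M : Matrix (Fin n) (Fin n) ℤ)
    (s : Finset (Fin n)) : ℤ :=
  (M.submatrix (fun i : s => (i : Fin n)) (fun j : s => (j : Fin n))).det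

/-- `M` is an almost non-singular M-matrix: all proper principal minors are
positive and the determinant is non-negative. -/
def AlmostNSM {n : ℕ} (M : Matrix (Fin n) (Fin n) ℤ) : Prop :=
  (∀ s : Finset (Fin n), s ≠ Finset.univ → 0 < principalMinorZ M s) ∧ 0 ≤ M.det

theorem principalMinorZ_empty {n : ℕ} (M : Matrix (Fin n) (Fin n) ℤ) :
    principalMinorZ M ∅ = 1 :=
  Matrix.det_isEmpty

theorem principalMinorZ_singleton {n : ℕ} (M : Matrix (Fin n) (Fin n) ℤ) (i : Fin n) :
    principalMinorZ M {i} = M i i :=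
  Matrix.det_unique _

theorem almostNSM_fin_two_iff (M : Matrix (Fin 2) (Fin 2) ℤ) :
    AlmostNSM M ↔ 0 < M 0 0 ∧ 0 < M 1 1 ∧ 0 ≤ M.det := by
  have hsubsets : ∀ s : Finset (Fin 2), s ≠ Finset.univ → s = ∅ ∨ s = {0} ∨ s = {1} := by
    decide
  constructor
  · rintro ⟨hminor, hdet⟩
    refine ⟨?_, ?_, hdet⟩
    · simpa only [principalMinorZ_singleton] using hminor {0} (by decide)
    · simpa only [principalMinorZ_singleton] using hminor {1} (by decide)
  · rintro ⟨h₀, h₁, hdet⟩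
    refine ⟨fun s hs => ?_, hdet⟩
    rcases hsubsets s hs with rfl | rfl | rfl
    · simp only [principalMinorZ_empty, zero_lt_one]
    · rwa [principalMinorZ_singleton]
    · rwa [principalMinorZ_singleton]

theorem almostNSM_diagonal_sub_antidiagonal_iff {a b d₁ d₂ : ℤ} (h₁ : 0 < d₁) (h₂ : 0 < d₂) :
    AlmostNSM (Matrix.diagonal ![d₁, d₂] - !![0, a; b, 0]) ↔ a * b ≤ d₁ * d₂ := by
  rw [almostNSM_fin_two_iff, Matrix.det_fin_two]
  simp [Matrix.diagonal, h₁, h₂]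

theorem setOf_minimal_eq_of_imp_of_exists_le {α : Type*} [PartialOrder α] {S T : α → Prop}
    (hTS : ∀ p, T p → S p) (hdom : ∀ p, S p → ∃ t, T t ∧ t ≤ p) :
    {p | S p ∧ ∀ q, S q → q ≤ p → q = p} = {p | T p ∧ ∀ q, T q → q ≤ p → q = p} := by
  ext p
  constructor
  · rintro ⟨hS, hmin⟩
    obtain ⟨t, hT, htp⟩ := hdom p hS
    obtain rfl : t = p := hmin t (hTS t hT) htp
    exact ⟨hT, fun q hq hqp => hmin q (hTS q hq) hqp⟩
  · rintro ⟨hT, hmin⟩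
    refine ⟨hTS p hT, fun q hq hqp => ?_⟩
    obtain ⟨t, hT', htq⟩ := hdom q hq
    obtain rfl : t = p := hmin t hT' (htq.trans hqp)
    exact le_antisymm hqp htq

section CeilDiv

variable {m d e : ℤ}

theorem ceil_div_le_iff (hd : 0 < d) : ⌈(m : ℚ) / d⌉ ≤ e ↔ m ≤ d * e := by
  rw [Int.ceil_le, div_le_iff₀ (by exact_mod_cast hd), ← Int.cast_mul, Int.cast_le, mul_comm]

theorem le_mul_max_one_ceil_div (hd : 0 < d) : m ≤ d * max 1 ⌈(m : ℚ) / d⌉ :=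
  (ceil_div_le_iff hd).mp (le_max_right _ _)

theorem max_one_ceil_div_le (hd : 0 < d) (he : 0 < e) (h : m ≤ d * e) :
    max 1 ⌈(m : ℚ) / d⌉ ≤ e :=
  max_le he ((ceil_div_le_iff hd).mpr h)

theorem le_min_max_one_mul (he : 0 < e) (h : m ≤ d * e) : m ≤ min d (max 1 m) * e := by
  rcases min_cases d (max 1 m) with ⟨hmin, -⟩ | ⟨hmin, -⟩
  · rwa [hmin]
  · rw [hmin]
    nlinarith [le_max_right 1 m, le_max_left 1 m]

end CeilDiv

/-- the base case for 2×2 matrices. -/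
theorem stmt_12 (a b : ℕ) :
    (∀ d₁ d₂ : ℤ, 0 < d₁ → 0 < d₂ →
      (AlmostNSM (Matrix.diagonal ![d₁, d₂] - !![0, (a : ℤ); (b : ℤ), 0]) ↔
        (a : ℤ) * b ≤ d₁ * d₂)) ∧
    {p : ℤ × ℤ | (0 < p.1 ∧ 0 < p.2 ∧
        AlmostNSM (Matrix.diagonal ![p.1, p.2] - !![0, (a : ℤ); (b : ℤ), 0])) ∧
      ∀ q : ℤ × ℤ, (0 < q.1 ∧ 0 < q.2 ∧
        AlmostNSM (Matrix.diagonal ![q.1, q.2] - !![0, (a : ℤ); (b : ℤ), 0])) →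
        q ≤ p → q = p} =
    {p : ℤ × ℤ | (∃ d : ℤ, 0 < d ∧ d ≤ max 1 ((a : ℤ) * b) ∧
        p = (d, max 1 ⌈((a : ℚ) * b) / (d : ℚ)⌉)) ∧
      ∀ q : ℤ × ℤ, (∃ d : ℤ, 0 < d ∧ d ≤ max 1 ((a : ℤ) * b) ∧
        q = (d, max 1 ⌈((a : ℚ) * b) / (d : ℚ)⌉)) → q ≤ p → q = p} := by
  have hcast : ((a : ℚ) * b) = (((a : ℤ) * b : ℤ) : ℚ) := by push_cast; rfl
  rw [hcast]
  refine ⟨fun d₁ d₂ h₁ h₂ => almostNSM_diagonal_sub_antidiagonal_iff h₁ h₂, ?_⟩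
  apply setOf_minimal_eq_of_imp_of_exists_le
  · rintro p ⟨d, hd, -, rfl⟩
    have hceil : 0 < max 1 ⌈(((a : ℤ) * b : ℤ) : ℚ) / d⌉ :=
      one_pos.trans_le (le_max_left _ _)
    exact ⟨hd, hceil, (almostNSM_diagonal_sub_antidiagonal_iff hd hceil).mpr
      (le_mul_max_one_ceil_div hd)⟩
  · rintro ⟨d₁, d₂⟩ ⟨h₁, h₂, hM⟩
    rw [almostNSM_diagonal_sub_antidiagonal_iff h₁ h₂] at hM
    have hd : 0 < min d₁ (max 1 ((a : ℤ) * b)) := lt_min h₁ (by positivity)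
    refine ⟨_, ⟨_, hd, min_le_right _ _, rfl⟩, min_le_left _ _, ?_⟩
    exact max_one_ceil_div_le hd h₂ (le_min_max_one_mul h₂ hM)
end

section
/- For a = 1, the matrix L_a = Diag(1,1,a,1,1) − A(P₅), where A(P₅) is the adjacency matrix of the path on 5 vertices, satisfies L_a·(1,1,0,−1,−1)ᵗ = 0ᵗ; hence det(Diag(1,1,a,1,1) − A(P₅)) = 0 for all positive integers a, yet (1,1,a,1,1) is not a d-arithmetical structure of A(P₅) for any a (so vanishing of the determinant does not characterize d-arithmetical structures). -/
/-! The vector `(1, 1, 0, -1, -1)` vanishes at the middle vertex, so it lies in the kernel of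
`Diag(1, 1, a, 1, 1) - A(P₅)` whatever `a` is, and the determinant vanishes. On the other hand the
first two rows of the system force `r₁ = r₂` and then `r₃ = r₂ - r₁ = 0`, so no kernel vector is
strictly positive. -/

/-- The adjacency matrix of the path on 5 vertices. -/
def adjP5 : Matrix (Fin 5) (Fin 5) ℤ :=
  !![0, 1, 0, 0, 0;
     1, 0, 1, 0, 0;
     0, 1, 0, 1, 0;
     0, 0, 1, 0, 1;
     0, 0, 0, 1, 0]

open Matrix

lemma diagonal_sub_adjP5_mulVec (a : ℤ) (r : Fin 5 → ℤ) :
    (diagonal ![1, 1, a, 1, 1] - adjP5) *ᵥ r =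
      ![r 0 - r 1, r 1 - r 0 - r 2, a * r 2 - r 1 - r 3, r 3 - r 2 - r 4, r 4 - r 3] := by
  ext i
  fin_cases i <;>
    simp [adjP5, mulVec, dotProduct, Fin.sum_univ_five] <;> ring

lemma diagonal_sub_adjP5_mulVec_antisymm (a : ℤ) :
    (diagonal ![1, 1, a, 1, 1] - adjP5) *ᵥ ![1, 1, 0, -1, -1] = 0 := by
  rw [diagonal_sub_adjP5_mulVec]
  ext i
  fin_cases i <;> simp

lemma det_diagonal_sub_adjP5 (a : ℤ) : (diagonal ![1, 1, a, 1, 1] - adjP5).det = 0 :=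
  exists_mulVec_eq_zero_iff.mp
    ⟨_, fun h => by simpa using congrFun h 0, diagonal_sub_adjP5_mulVec_antisymm a⟩

lemma apply_two_eq_zero_of_diagonal_sub_adjP5_mulVec_eq_zero {a : ℤ} {r : Fin 5 → ℤ}
    (h : (diagonal ![1, 1, a, 1, 1] - adjP5) *ᵥ r = 0) : r 2 = 0 := by
  rw [diagonal_sub_adjP5_mulVec] at h
  have h₀ : r 0 - r 1 = 0 := congrFun h 0
  have h₁ : r 1 - r 0 - r 2 = 0 := congrFun h 1
  linarith

/-- `Diag(1,1,a,1,1) − A(P₅)` kills `(1,1,0,−1,−1)` (for `a = 1`),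
its determinant vanishes for every positive integer `a`, yet `(1,1,a,1,1)` is never
a d-arithmetical structure of `A(P₅)`. -/
theorem stmt_14 :
    (Matrix.diagonal ![1, 1, (1 : ℤ), 1, 1] - adjP5).mulVec ![1, 1, 0, -1, -1] = 0 ∧
    (∀ a : ℤ, 0 < a → (Matrix.diagonal ![1, 1, a, 1, 1] - adjP5).det = 0) ∧
    (∀ a : ℤ, 0 < a → ¬ ∃ r : Fin 5 → ℤ, (∀ i, 0 < r i) ∧
      (Matrix.diagonal ![1, 1, a, 1, 1] - adjP5).mulVec r = 0) := by
  refine ⟨diagonal_sub_adjP5_mulVec_antisymm 1, fun a _ => det_diagonal_sub_adjP5 a, ?_⟩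
  rintro a - ⟨r, hr_pos, hr_ker⟩
  exact (hr_pos 2).ne' (apply_two_eq_zero_of_diagonal_sub_adjP5_mulVec_eq_zero hr_ker)
end

section
/- There is no 3×3 integer matrix A with zero diagonal such that det(Diag(x₁,x₂,x₃) − A) = x₁x₂x₃ − 19x₁ + 2x₂ + 3x₃ − 23. -/
/-!
Expanding the determinant, a zero-diagonal matrix `A` gives
`x₁x₂x₃ - a₂₃a₃₂ x₁ - a₁₃a₃₁ x₂ - a₁₂a₂₁ x₃ - (s + t)` with `s = a₁₂a₂₃a₃₁`, `t = a₁₃a₂₁a₃₂`.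
Since `s t` is the product of the three coefficients of the linear terms, matching the target forces
`s t = 19 · (-2) · (-3) = 114` and `s + t = 23`, so `(s - t)² = 23² - 4 · 114 = 73`,
which is not a square.
-/

open MvPolynomial

namespace MvPolynomial

variable {R : Type*} [CommRing R]

noncomputable def tripleProductAddAffine (a b c d : R) : MvPolynomial (Fin 3) R :=
  X 0 * X 1 * X 2 + C a * X 0 + C b * X 1 + C c * X 2 + C d

theorem eval_tripleProductAddAffine (a b c d : R) (v : Fin 3 → R) :
    eval v (tripleProductAddAffine a b c d) = v 0 * v 1 * v 2 + a * v 0 + b * v 1 + c * v 2 + d := by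
  simp [tripleProductAddAffine]

theorem tripleProductAddAffine_inj {a b c d a' b' c' d' : R}
    (h : tripleProductAddAffine a b c d = tripleProductAddAffine a' b' c' d') :
    a = a' ∧ b = b' ∧ c = c' ∧ d = d' := by
  have hv (v : Fin 3 → R) := congrArg (eval v) h
  simp only [eval_tripleProductAddAffine] at hv
  have hd := hv ![0, 0, 0]
  have ha := hv ![1, 0, 0]
  have hb := hv ![0, 1, 0]
  have hc := hv ![0, 0, 1]
  simp only [Matrix.cons_val_zero, Matrix.cons_val_one, Matrix.cons_val, mul_zero, mul_one, add_zero,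
    zero_add] at hd ha hb hc
  exact ⟨by linear_combination ha - hd, by linear_combination hb - hd,
    by linear_combination hc - hd, hd⟩

end MvPolynomial

theorem Matrix.det_diagonal_X_sub_map_C_of_diag_eq_zero {R : Type*} [CommRing R]
    (A : Matrix (Fin 3) (Fin 3) R) (hA : ∀ i, A i i = 0) :
    (Matrix.diagonal (fun i => (X i : MvPolynomial (Fin 3) R)) - A.map C).det =
      tripleProductAddAffine (-(A 1 2 * A 2 1)) (-(A 0 2 * A 2 0)) (-(A 0 1 * A 1 0))
        (-(A 0 1 * A 1 2 * A 2 0 + A 0 2 * A 1 0 * A 2 1)) := by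
  simp only [Matrix.det_fin_three, Matrix.sub_apply, Matrix.diagonal_apply, Matrix.map_apply, hA,
    tripleProductAddAffine, ↓reduceIte, Fin.reduceEq, map_zero, sub_zero, zero_sub, map_neg, map_add,
    map_mul]
  ring

theorem Int.not_exists_add_eq_mul_eq_of_not_isSquare {b c : ℤ} (hdisc : ¬ IsSquare (b ^ 2 - 4 * c)) :
    ¬ ∃ s t : ℤ, s + t = b ∧ s * t = c := by
  rintro ⟨s, t, rfl, rfl⟩
  exact hdisc ⟨s - t, by ring⟩

/-- no 3×3 integer matrix with zero diagonal has
`x₁x₂x₃ − 19x₁ + 2x₂ + 3x₃ − 23` as its determinant polynomial. -/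
theorem stmt_16 :
    ¬ ∃ A : Matrix (Fin 3) (Fin 3) ℤ, (∀ i, A i i = 0) ∧
      (Matrix.diagonal (fun i => (X i : MvPolynomial (Fin 3) ℤ)) - A.map C).det =
        X 0 * X 1 * X 2 - C 19 * X 0 + C 2 * X 1 + C 3 * X 2 - C 23 := by
  rintro ⟨A, hdiag, hdet⟩
  have htarget : X 0 * X 1 * X 2 - C 19 * X 0 + C 2 * X 1 + C 3 * X 2 - C 23 =
      tripleProductAddAffine (-19 : ℤ) 2 3 (-23) := by
    simp only [tripleProductAddAffine, map_neg]
    ring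
  rw [Matrix.det_diagonal_X_sub_map_C_of_diag_eq_zero A hdiag, htarget] at hdet
  obtain ⟨h12, h02, h01, hconst⟩ := tripleProductAddAffine_inj hdet
  refine Int.not_exists_add_eq_mul_eq_of_not_isSquare (b := 23) (c := 114) (by norm_num)
    ⟨A 0 1 * A 1 2 * A 2 0, A 0 2 * A 1 0 * A 2 1, by linarith, ?_⟩
  linear_combination -(A 0 2 * A 2 0 * (A 0 1 * A 1 0)) * h12 - 19 * (A 0 1 * A 1 0) * h02 + 38 * h01
end

section
/- Let a, b₁, b₂, c ∈ ℤ with a ≥ 1, f = a x₁x₂ + b₁x₁ + b₂x₂ + c, d₁⁺ = max(1, ⌈(1−b₂)/a⌉), d₂⁺ = max(1, ⌈(1−b₁)/a⌉). Then the set of minimal elements of D_{≥0}(f) = { d ∈ ℕ₊² : a d₂ + b₁ ≥ 1, a d₁ + b₂ ≥ 1, f(d) ≥ 0 } equals the set of minimal elements of { (d, max(d₂⁺, ⌈−(c + b₁d)/(ad + b₂)⌉)) : d ∈ ℕ₊, d₁⁺ ≤ d ≤ max(d₁⁺, ⌈−(c + b₂d₂⁺)/(a d₂⁺ + b₁)⌉)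 }. -/
open Set

/- For `x ≥ d₁⁺` let `g x` be the least `y ≥ d₂⁺` with `f(x, y) ≥ 0`: a ceiling, since `f(x, ·)` is
affine with positive slope `a x + b₂`. Then `D_{≥0}(f) = {(x, y) : x ≥ d₁⁺, y ≥ g x}`, and for the
least `M ≥ d₁⁺` with `f(M, d₂⁺) ≥ 0` we get `g M = d₂⁺ ≤ g x` for all `x`. So a minimal element of
this region lies on the graph of `g`, and not beyond `M` because `(M, d₂⁺)` would lie below it;
conversely a point of the region below some `(d, g d)` with `d ≤ M` dominates `(u, g u)` with
`u ∈ [d₁⁺, M]`. -/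

theorem sep_forall_le_imp_eq_eq_setOf_minimal {γ : Type*} [PartialOrder γ] (s : Set γ) :
    {p ∈ s | ∀ q ∈ s, q ≤ p → q = p} = {p | Minimal (· ∈ s) p} := by
  ext p
  simp only [mem_ofPred_eq, minimal_iff, eq_comm (a := p)]

theorem setOf_minimal_epigraph_eq_setOf_minimal_graph {α β : Type*} [LinearOrder α]
    [PartialOrder β] (g : α → β) {lo M : α} (hlo : lo ≤ M)
    (hM : ∀ x, M < x → g M ≤ g x) :
    {p : α × β | Minimal (· ∈ {q : α × β | lo ≤ q.1 ∧ g q.1 ≤ q.2}) p} =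
      {p | Minimal (· ∈ (fun x ↦ (x, g x)) '' Icc lo M) p} := by
  ext ⟨x, y⟩
  simp only [mem_ofPred_eq, minimal_iff, mem_image, mem_Icc, Prod.forall, Prod.mk_le_mk,
    Prod.mk.injEq]
  constructor
  · rintro ⟨⟨hx, hy⟩, hmin⟩
    obtain ⟨-, rfl⟩ := hmin x (g x) ⟨hx, le_rfl⟩ ⟨le_rfl, hy⟩
    have hxM : x ≤ M := by
      by_contra! hMx
      exact hMx.ne (hmin M (g M) ⟨hlo, le_rfl⟩ ⟨hMx.le, hM x hMx⟩).1.symm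
    refine ⟨⟨x, ⟨hx, hxM⟩, rfl, rfl⟩, ?_⟩
    rintro _ _ ⟨u, ⟨hu, -⟩, rfl, rfl⟩ hle
    exact hmin u (g u) ⟨hu, le_rfl⟩ hle
  · rintro ⟨⟨d, ⟨hd, hdM⟩, rfl, rfl⟩, hmin⟩
    refine ⟨⟨hd, le_rfl⟩, fun u v ⟨hu, hv⟩ ⟨hud, hvd⟩ ↦ ?_⟩
    obtain ⟨rfl, hgu⟩ := hmin u (g u) ⟨u, ⟨hu, hud.trans hdM⟩, rfl, rfl⟩ ⟨hud, hv.trans hvd⟩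
    exact ⟨rfl, le_antisymm (hgu ▸ hv) hvd⟩

theorem max_ceil_intCast_div_le_iff {l n m k : ℤ} (hm : 0 < m) :
    max l ⌈(n : ℚ) / m⌉ ≤ k ↔ l ≤ k ∧ n ≤ m * k := by
  rw [max_le_iff, Int.ceil_le, div_le_iff₀ (by exact_mod_cast hm), mul_comm]
  exact_mod_cast Iff.rfl

section Bilinear

variable {a b b₁ b₂ c : ℤ}

/-- The least `x > 0` with `a x + b ≥ 1`, provided `a > 0`. -/
def posBound (a b : ℤ) : ℤ :=
  max 1 ⌈(((1 - b : ℤ) : ℚ)) / (a : ℚ)⌉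

theorem posBound_le_iff (ha : 0 < a) {k : ℤ} : posBound a b ≤ k ↔ 0 < k ∧ 1 ≤ a * k + b := by
  rw [posBound, max_ceil_intCast_div_le_iff ha]
  omega

/-- The least `y ≥ lo` with `a x y + b₁ x + b₂ y + c ≥ 0`, provided `a x + b₂ > 0`. -/
def leastNonnegSecond (a b₁ b₂ c lo x : ℤ) : ℤ :=
  max lo ⌈(-(((c : ℚ) + (b₁ : ℚ) * (x : ℚ)))) / ((a : ℚ) * (x : ℚ) + (b₂ : ℚ))⌉

theorem leastNonnegSecond_le_iff {lo x y : ℤ} (hx : 0 < a * x + b₂) :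
    leastNonnegSecond a b₁ b₂ c lo x ≤ y ↔ lo ≤ y ∧ 0 ≤ a * x * y + b₁ * x + b₂ * y + c := by
  have key := max_ceil_intCast_div_le_iff (l := lo) (n := -(c + b₁ * x)) (k := y) hx
  push_cast at key
  rw [leastNonnegSecond, key]
  constructor <;> rintro ⟨hlo, h⟩ <;> exact ⟨hlo, by linarith⟩

theorem setOf_nonneg_eq_epigraph (ha : 0 < a) :
    {p : ℤ × ℤ | 0 < p.1 ∧ 0 < p.2 ∧ 1 ≤ a * p.2 + b₁ ∧ 1 ≤ a * p.1 + b₂ ∧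
        0 ≤ a * p.1 * p.2 + b₁ * p.1 + b₂ * p.2 + c} =
      {p | posBound a b₂ ≤ p.1 ∧ leastNonnegSecond a b₁ b₂ c (posBound a b₁) p.1 ≤ p.2} := by
  ext ⟨x, y⟩
  simp only [mem_ofPred_eq]
  constructor
  · rintro ⟨hx, hy, hy₁, hx₂, hf⟩
    exact ⟨(posBound_le_iff ha).2 ⟨hx, hx₂⟩,
      (leastNonnegSecond_le_iff (by omega)).2 ⟨(posBound_le_iff ha).2 ⟨hy, hy₁⟩, hf⟩⟩
  · rintro ⟨hx, hgy⟩
    obtain ⟨hx, hx₂⟩ := (posBound_le_iff ha).1 hx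
    obtain ⟨hy, hf⟩ := (leastNonnegSecond_le_iff (by omega)).1 hgy
    obtain ⟨hy, hy₁⟩ := (posBound_le_iff ha).1 hy
    exact ⟨hx, hy, hy₁, hx₂, hf⟩

theorem leastNonnegSecond_corner_le (ha : 0 < a) :
    leastNonnegSecond a b₁ b₂ c (posBound a b₁)
        (leastNonnegSecond a b₂ b₁ c (posBound a b₂) (posBound a b₁)) ≤ posBound a b₁ := by
  set M := leastNonnegSecond a b₂ b₁ c (posBound a b₂) (posBound a b₁)
  obtain ⟨-, hb₁⟩ := (posBound_le_iff ha).1 (le_refl (posBound a b₁))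
  obtain ⟨hM, hfM⟩ := (leastNonnegSecond_le_iff (by omega)).1 (le_refl M)
  obtain ⟨-, hb₂⟩ := (posBound_le_iff ha).1 hM
  exact (leastNonnegSecond_le_iff (by omega)).2 ⟨le_rfl, by linarith⟩

end Bilinear

/-- description of the minimal elements of `D_{≥0}(f)` for a
dominated polynomial `f = a x₁x₂ + b₁x₁ + b₂x₂ + c` in two variables. -/
theorem stmt_19 (a b₁ b₂ c : ℤ) (ha : 1 ≤ a)
    (d₁p d₂p : ℤ)
    (hd₁p : d₁p = max 1 ⌈(((1 - b₂ : ℤ) : ℚ)) / (a : ℚ)⌉)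
    (hd₂p : d₂p = max 1 ⌈(((1 - b₁ : ℤ) : ℚ)) / (a : ℚ)⌉)
    (Dset Cset : Set (ℤ × ℤ))
    (hD : Dset = {p : ℤ × ℤ | 0 < p.1 ∧ 0 < p.2 ∧ 1 ≤ a * p.2 + b₁ ∧
      1 ≤ a * p.1 + b₂ ∧ 0 ≤ a * p.1 * p.2 + b₁ * p.1 + b₂ * p.2 + c})
    (hC : Cset = {p : ℤ × ℤ | ∃ d : ℤ, 0 < d ∧ d₁p ≤ d ∧
      d ≤ max d₁p ⌈(-(((c : ℚ) + (b₂ : ℚ) * (d₂p : ℚ)))) / ((a : ℚ) * (d₂p : ℚ) + (b₁ : ℚ))⌉ ∧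
      p = (d, max d₂p ⌈(-(((c : ℚ) + (b₁ : ℚ) * (d : ℚ)))) / ((a : ℚ) * (d : ℚ) + (b₂ : ℚ))⌉)}) :
    {p ∈ Dset | ∀ q ∈ Dset, q ≤ p → q = p} =
    {p ∈ Cset | ∀ q ∈ Cset, q ≤ p → q = p} := by
  replace ha : 0 < a := ha
  replace hd₁p : d₁p = posBound a b₂ := hd₁p
  replace hd₂p : d₂p = posBound a b₁ := hd₂p
  subst hd₁p hd₂p
  set g := leastNonnegSecond a b₁ b₂ c (posBound a b₁)
  set M := leastNonnegSecond a b₂ b₁ c (posBound a b₂) (posBound a b₁)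
  have hC' : Cset = (fun x ↦ (x, g x)) '' Icc (posBound a b₂) M := by
    ext p
    rw [hC, mem_ofPred_eq, mem_image]
    constructor
    · rintro ⟨d, -, hd, hdM, rfl⟩
      exact ⟨d, ⟨hd, hdM⟩, rfl⟩
    · rintro ⟨d, ⟨hd, hdM⟩, rfl⟩
      exact ⟨d, ((posBound_le_iff ha).1 hd).1, hd, hdM, rfl⟩
  rw [sep_forall_le_imp_eq_eq_setOf_minimal, sep_forall_le_imp_eq_eq_setOf_minimal, hD,
    setOf_nonneg_eq_epigraph ha, hC']
  exact setOf_minimal_epigraph_eq_setOf_minimal_graph g (le_max_left _ _)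
    fun x _ ↦ (leastNonnegSecond_corner_le ha).trans (le_max_left _ _)
end
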